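/- Let M→N be a matroid perspective on a finite linearly ordered ground set E. For every A ⊆ E there exists a unique B ⊆ E that is independent in M and spanning in N such that B∖Int_N(B) ⊆ A ⊆ B∪Ext_M(B). In other words, the intervals [B∖Int_N(B), B∪Ext_M(B)], as B ranges over all subsets of E that are independent in M and spanning in N, partition the power set of E. -/

import Mathlib

/-- A circuit of a matroid: a minimal dependent set. -/
def Matroid.IsCircuit' {α : Type*} (M : Matroid α) (C : Set α) : Prop :=
  M.Dep C ∧ ∀ D, M.Dep D → D ⊆ C → D = C

/-- A cocircuit of a matroid: a circuit of the dual matroid. -/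
def Matroid.IsCocircuit' {α : Type*} (M : Matroid α) (C : Set α) : Prop :=
  M✶.IsCircuit' C

/-- The rank of a set in a matroid: the largest cardinality of an independent subset. -/
noncomputable def Matroid.rk' {α : Type*} (M : Matroid α) (A : Set α) : ℕ :=
  sSup {n : ℕ | ∃ I, I ⊆ A ∧ M.Indep I ∧ I.ncard = n}

/-- `e` is the minimum element of the set `C`. -/
def IsMinOf {α : Type*} [LinearOrder α] (C : Set α) (e : α) : Prop :=
  e ∈ C ∧ ∀ x ∈ C, e ≤ x

/-- `Int_M(A)`: internally active elements of `A` w.r.t. `M`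
(the ground set is the whole type, so `E ∖ A = Aᶜ`). -/
def IntSet {α : Type*} [LinearOrder α] (M : Matroid α) (A : Set α) : Set α :=
  {e | e ∈ A ∧ ∃ C, M.IsCocircuit' C ∧ C ⊆ Aᶜ ∪ {e} ∧ IsMinOf C e}

/-- `Ext_M(A)`: externally active elements w.r.t. `M`. -/
def ExtSet {α : Type*} [LinearOrder α] (M : Matroid α) (A : Set α) : Set α :=
  {e | e ∉ A ∧ ∃ C, M.IsCircuit' C ∧ C ⊆ A ∪ {e} ∧ IsMinOf C e}

/-- `P_M(A)`: smallest elements of cocircuits of `M` contained in `E ∖ A`. -/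
def PActSet {α : Type*} [LinearOrder α] (M : Matroid α) (A : Set α) : Set α :=
  {e | e ∉ A ∧ ∃ C, M.IsCocircuit' C ∧ C ⊆ Aᶜ ∧ IsMinOf C e}

/-- `Q_M(A)`: smallest elements of circuits of `M` contained in `A`. -/
def QActSet {α : Type*} [LinearOrder α] (M : Matroid α) (A : Set α) : Set α :=
  {e | e ∈ A ∧ ∃ C, M.IsCircuit' C ∧ C ⊆ A ∧ IsMinOf C e}

/-!
Put `M₂ = N✶`. That `M → N` is a perspective means that no circuit of `M` meets a circuit of
`M₂` in a single element, and the whole statement is symmetric under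
`(M, A, B) ↦ (M₂, Aᶜ, Bᶜ)`. Writing `Q_M(S)` for the minima of `M`-circuits contained in `S`,
the unique `B` is `(A ∖ Q_M(A)) ∪ Q_{M₂}(Aᶜ)`: for any admissible `B` one shows
`A ∩ B = A ∖ Q_M(A)`, and dually `Aᶜ ∩ Bᶜ = Aᶜ ∖ Q_{M₂}(Aᶜ)`.

Existence and uniqueness both rest on one purification step. Given a circuit with minimum `e`
and a set `R` of elements each of which is the minimum of a circuit of its own, eliminate the
smallest `x ∈ R ∖ {e}` between the two circuits: the result is a circuit with minimum `e` whose
elements of `R ∖ {e}` all exceed `x`. Iterating yields a circuit with minimum `e` avoiding `R`.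
-/

open Set

section

variable {α : Type*}

lemma IsMinOf.exists_of_nonempty [Finite α] [LinearOrder α] {C : Set α} (hC : C.Nonempty) :
    ∃ e, IsMinOf C e := by
  obtain ⟨e, he, hmin⟩ := exists_min_image C id (toFinite C) hC
  exact ⟨e, he, hmin⟩

lemma ncard_upperClosure_lt_of_subset_Ioi [Finite α] [Preorder α] {s t : Set α} {x : α}
    (hs : s ⊆ Ioi x) (hx : x ∈ t) :
    (upperClosure s : Set α).ncard < (upperClosure t : Set α).ncard := by
  refine ncard_lt_ncard ((ssubset_iff_of_subset ?_).2 ⟨x, ?_, ?_⟩)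
  · refine (upperClosure_min hs (isUpperSet_Ioi x)).trans fun y hy ↦ ?_
    exact mem_upperClosure.2 ⟨x, hx, hy.le⟩
  · exact mem_upperClosure.2 ⟨x, hx, le_rfl⟩
  · exact fun h ↦ lt_irrefl x (upperClosure_min hs (isUpperSet_Ioi x) h)

namespace Matroid

variable {M N M₁ M₂ : Matroid α} {A B C K X R : Set α} {e : α}

lemma isCircuit'_iff : M.IsCircuit' C ↔ M.IsCircuit C :=
  isCircuit_iff.symm

lemma spanning_iff_dual_indep_compl (hE : M.E = univ) : M.Spanning B ↔ M✶.Indep Bᶜ := by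
  rw [spanning_iff_compl_coindep (hE ▸ subset_univ B), hE, ← compl_eq_univ_sdiff, coindep_def]

lemma closure_subset_closure_of_forall_isFlat (hE : M.E = N.E)
    (hMN : ∀ F, N.IsFlat F → M.IsFlat F) (X : Set α) : M.closure X ⊆ N.closure X := by
  rw [← closure_inter_ground, ← (hMN _ (N.isFlat_closure X)).closure]
  exact M.closure_subset_closure (hE ▸ N.inter_ground_subset_closure X)

/-- Reduce to the orthogonality of `N` itself, via an `N`-circuit inside `insert e (C ∖ {e})`. -/
lemma IsCircuit.inter_isCocircuit_ne_singleton_of_forall_isFlat (hE : M.E = N.E)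
    (hMN : ∀ F, N.IsFlat F → M.IsFlat F) (hC : M.IsCircuit C) (hK : N.IsCocircuit K) :
    C ∩ K ≠ {e} := by
  intro hCK
  have heCK : e ∈ C ∩ K := hCK ▸ rfl
  have hecl : e ∈ N.closure (C \ {e}) :=
    closure_subset_closure_of_forall_isFlat hE hMN _
      (hC.mem_closure_sdiff_singleton_of_mem heCK.1)
  obtain ⟨C', hC'C, hC', heC'⟩ := N.exists_isCircuit_of_mem_closure hecl (by simp)
  refine hC'.inter_isCocircuit_ne_singleton hK
    (eq_singleton_iff_unique_mem.2 ⟨⟨heC', heCK.2⟩, fun y ⟨hyC', hyK⟩ ↦ ?_⟩)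
  obtain rfl | ⟨hyC, -⟩ := hC'C hyC'
  · rfl
  · have hy : y ∈ C ∩ K := ⟨hyC, hyK⟩
    rwa [hCK] at hy

def CircuitsOrthogonal (M₁ M₂ : Matroid α) : Prop :=
  ∀ ⦃C D : Set α⦄ ⦃e : α⦄, M₁.IsCircuit C → M₂.IsCircuit D → C ∩ D ≠ {e}

lemma CircuitsOrthogonal.symm (h : CircuitsOrthogonal M₁ M₂) : CircuitsOrthogonal M₂ M₁ :=
  fun _ _ _ hC hD hCD ↦ h hD hC (by rwa [inter_comm])

lemma circuitsOrthogonal_dual_of_forall_isFlat (hE : M.E = N.E)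
    (hMN : ∀ F, N.IsFlat F → M.IsFlat F) : CircuitsOrthogonal M N✶ :=
  fun _ _ _ hC hK ↦ hC.inter_isCocircuit_ne_singleton_of_forall_isFlat hE hMN hK

section Activity

variable [LinearOrder α]

lemma mem_extSet_iff :
    e ∈ ExtSet M B ↔ e ∉ B ∧ ∃ C, M.IsCircuit C ∧ C ⊆ insert e B ∧ IsMinOf C e := by
  simp only [ExtSet, mem_ofPred_eq, isCircuit'_iff, union_singleton]

lemma mem_qActSet_iff : e ∈ QActSet M A ↔ ∃ C, M.IsCircuit C ∧ C ⊆ A ∧ IsMinOf C e := by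
  simp only [QActSet, mem_ofPred_eq, isCircuit'_iff]
  exact ⟨fun h ↦ h.2, fun ⟨C, hC, hCA, he⟩ ↦ ⟨hCA he.1, C, hC, hCA, he⟩⟩

lemma qActSet_subset : QActSet M A ⊆ A :=
  fun _ h ↦ h.1

lemma intSet_eq_extSet_dual_compl : IntSet M B = ExtSet M✶ Bᶜ := by
  ext e
  simp only [IntSet, ExtSet, IsCocircuit', mem_ofPred_eq, mem_compl_iff, not_not]

lemma IsCircuit.exists_isMinOf_inter_sdiff_subset_Ioi [Finite α] {x : α}
    (hR : ∀ x ∈ X ∩ R, ∃ D, M.IsCircuit D ∧ D ⊆ insert x X ∧ IsMinOf D x)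
    (hC : M.IsCircuit C) (hCX : C ⊆ insert e X) (he : IsMinOf C e)
    (hx : IsMinOf ((C ∩ R) \ {e}) x) :
    ∃ C', (M.IsCircuit C' ∧ C' ⊆ insert e X ∧ IsMinOf C' e) ∧ (C' ∩ R) \ {e} ⊆ Ioi x := by
  obtain ⟨⟨hxC, hxR⟩, hxe : x ≠ e⟩ := hx.1
  have hxX : x ∈ X := (hCX hxC).resolve_left hxe
  obtain ⟨D, hD, hDX, hxD⟩ := hR x ⟨hxX, hxR⟩
  have hex : e < x := (he.2 x hxC).lt_of_ne hxe.symm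
  have heD : e ∉ D := fun heD ↦ (hxD.2 e heD).not_gt hex
  obtain ⟨C', hC'CD, hC', heC'⟩ := hC.strong_elimination hD hxC hxD.1 he.1 heD
  refine ⟨C', ⟨hC', fun y hy ↦ ?_, heC', fun y hy ↦ ?_⟩, fun y ⟨⟨hyC', hyR⟩, hye⟩ ↦ ?_⟩
  · obtain ⟨hyC | hyD, hyx⟩ := hC'CD hy
    · exact hCX hyC
    · exact insert_subset_insert (subset_insert e X) (hDX hyD) |>.resolve_left hyx
  · obtain ⟨hyC | hyD, -⟩ := hC'CD hy
    · exact he.2 y hyC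
    · exact hex.le.trans (hxD.2 y hyD)
  · obtain ⟨hyC | hyD, hyx : y ≠ x⟩ := hC'CD hyC'
    · exact (hx.2 y ⟨⟨hyC, hyR⟩, hye⟩).lt_of_ne hyx.symm
    · exact (hxD.2 y hyD).lt_of_ne hyx.symm

/-- Take the circuit minimising the upper closure of `(C ∩ R) ∖ {e}`: the elimination step above
would shrink it unless that set is empty. -/
lemma IsCircuit.exists_isMinOf_subset_insert_sdiff [Finite α]
    (hR : ∀ x ∈ X ∩ R, ∃ D, M.IsCircuit D ∧ D ⊆ insert x X ∧ IsMinOf D x)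
    (hC : M.IsCircuit C) (hCX : C ⊆ insert e X) (he : IsMinOf C e) :
    ∃ C', M.IsCircuit C' ∧ C' ⊆ insert e (X \ R) ∧ IsMinOf C' e := by
  obtain ⟨C₀, ⟨hC₀, hC₀X, he₀⟩, hC₀min⟩ :=
    exists_min_image {C | M.IsCircuit C ∧ C ⊆ insert e X ∧ IsMinOf C e}
      (fun C ↦ (upperClosure ((C ∩ R) \ {e}) : Set α).ncard) (toFinite _) ⟨C, hC, hCX, he⟩
  refine ⟨C₀, hC₀, fun y hy ↦ ?_, he₀⟩
  by_cases hye : y = e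
  · exact hye ▸ mem_insert y _
  refine mem_insert_of_mem e ⟨(hC₀X hy).resolve_left hye, fun hyR ↦ ?_⟩
  obtain ⟨x, hx⟩ := IsMinOf.exists_of_nonempty (C := (C₀ ∩ R) \ {e}) ⟨y, ⟨hy, hyR⟩, hye⟩
  obtain ⟨C', hC', hC'x⟩ := hC₀.exists_isMinOf_inter_sdiff_subset_Ioi hR hC₀X he₀ hx
  exact (hC₀min C' hC').not_gt (ncard_upperClosure_lt_of_subset_Ioi hC'x hx.1)

lemma CircuitsOrthogonal.exists_isCircuit_subset_insert_inter (h : CircuitsOrthogonal M₁ M₂)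
    (hAc : Aᶜ ⊆ Bᶜ ∪ ExtSet M₂ Bᶜ) (hA : A ⊆ B ∪ ExtSet M₁ B) (heA : e ∈ A) (heB : e ∉ B) :
    ∃ C, M₁.IsCircuit C ∧ C ⊆ insert e (A ∩ B) ∧ IsMinOf C e := by
  obtain ⟨-, C, hC, hCB, he⟩ := mem_extSet_iff.1 ((hA heA).resolve_left heB)
  refine ⟨C, hC, fun y hy ↦ ?_, he⟩
  obtain rfl | hyB := hCB hy
  · exact mem_insert y _
  refine mem_insert_of_mem e ⟨by_contra fun hyA ↦ ?_, hyB⟩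
  obtain ⟨-, D, hD, hDB, hy'⟩ := mem_extSet_iff.1 ((hAc hyA).resolve_left (not_not_intro hyB))
  refine h hC hD (eq_singleton_iff_unique_mem.2 ⟨⟨hy, hy'.1⟩, fun z ⟨hzC, hzD⟩ ↦ ?_⟩)
  obtain rfl | hzB := hDB hzD
  · rfl
  obtain rfl | hzB' := hCB hzC
  · exact absurd (le_antisymm (hy'.2 z hzD) (he.2 y hy) ▸ hyB) heB
  · exact absurd hzB' hzB

lemma CircuitsOrthogonal.inter_eq_sdiff_qActSet [Finite α] (h : CircuitsOrthogonal M₁ M₂)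
    (hB : M₁.Indep B) (hAc : Aᶜ ⊆ Bᶜ ∪ ExtSet M₂ Bᶜ) (hA : A ⊆ B ∪ ExtSet M₁ B) :
    A ∩ B = A \ QActSet M₁ A := by
  have hwit := fun e ↦ h.exists_isCircuit_subset_insert_inter (e := e) hAc hA
  ext e
  refine ⟨fun ⟨heA, heB⟩ ↦ ⟨heA, fun heQ ↦ ?_⟩,
    fun ⟨heA, heQ⟩ ↦ ⟨heA, by_contra fun heB ↦ heQ ?_⟩⟩
  · obtain ⟨C, hC, hCA, he⟩ := mem_qActSet_iff.1 heQ
    have hR : ∀ x ∈ A ∩ Bᶜ, ∃ D, M₁.IsCircuit D ∧ D ⊆ insert x A ∧ IsMinOf D x :=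
      fun x ⟨hxA, hxB⟩ ↦ (hwit x hxA hxB).imp
        fun D hD ↦ ⟨hD.1, hD.2.1.trans (insert_subset_insert inter_subset_left), hD.2.2⟩
    obtain ⟨C', hC', hC'B, -⟩ :=
      hC.exists_isMinOf_subset_insert_sdiff hR (hCA.trans (subset_insert e A)) he
    exact hC'.not_indep (hB.subset (hC'B.trans (insert_subset heB fun y hy ↦ not_not.1 hy.2)))
  · obtain ⟨C, hC, hCAB, he⟩ := hwit e heA heB
    exact mem_qActSet_iff.2 ⟨C, hC, hCAB.trans (insert_subset heA inter_subset_left), he⟩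

/-- The paper's `(A ∖ Q_M(A)) ∪ P_N(A)` for `M₁ = M`, `M₂ = N✶`. -/
def activeBasis (M₁ M₂ : Matroid α) (A : Set α) : Set α :=
  (A \ QActSet M₁ A) ∪ QActSet M₂ Aᶜ

lemma compl_activeBasis : (activeBasis M₁ M₂ A)ᶜ = activeBasis M₂ M₁ Aᶜ := by
  ext y
  have h₁ : y ∈ QActSet M₁ A → y ∈ A := fun h ↦ qActSet_subset h
  have h₂ : y ∈ QActSet M₂ Aᶜ → y ∉ A := fun h ↦ qActSet_subset h
  simp only [activeBasis, mem_compl_iff, mem_union, mem_sdiff, compl_compl]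
  tauto

lemma CircuitsOrthogonal.indep_activeBasis [Finite α] (h : CircuitsOrthogonal M₁ M₂)
    (hE : M₁.E = univ) (A : Set α) : M₁.Indep (activeBasis M₁ M₂ A) := by
  rw [indep_iff_forall_subset_not_isCircuit (by simp [hE])]
  intro C hCB hC
  by_cases hCQ : (C ∩ QActSet M₂ Aᶜ).Nonempty
  · -- the largest element of `C` in `Q_{M₂}(Aᶜ)` is the only common element of `C` and its circuit
    obtain ⟨p, ⟨hpC, hpQ⟩, hpmax⟩ := exists_max_image _ id (toFinite _) hCQ
    obtain ⟨D, hD, hDA, hp⟩ := mem_qActSet_iff.1 hpQ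
    refine h hC hD (eq_singleton_iff_unique_mem.2 ⟨⟨hpC, hp.1⟩, fun z ⟨hzC, hzD⟩ ↦ ?_⟩)
    have hzQ : z ∈ QActSet M₂ Aᶜ := (hCB hzC).resolve_left fun hz ↦ hDA hzD hz.1
    exact le_antisymm (hpmax z ⟨hzC, hzQ⟩) (hp.2 z hzD)
  · have hCA : C ⊆ A \ QActSet M₁ A :=
      fun y hy ↦ (hCB hy).resolve_right fun hyQ ↦ hCQ ⟨y, hy, hyQ⟩
    obtain ⟨m, hm⟩ := IsMinOf.exists_of_nonempty hC.nonempty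
    exact (hCA hm.1).2 (mem_qActSet_iff.2 ⟨C, hC, fun y hy ↦ (hCA hy).1, hm⟩)

lemma subset_activeBasis_union_extSet [Finite α] (A : Set α) :
    A ⊆ activeBasis M₁ M₂ A ∪ ExtSet M₁ (activeBasis M₁ M₂ A) := by
  intro a haA
  by_cases ha : a ∈ activeBasis M₁ M₂ A
  · exact Or.inl ha
  have haQ : a ∈ QActSet M₁ A := by_contra fun h ↦ ha (Or.inl ⟨haA, h⟩)
  obtain ⟨C, hC, hCA, he⟩ := mem_qActSet_iff.1 haQ
  have hR : ∀ x ∈ A ∩ QActSet M₁ A, ∃ D, M₁.IsCircuit D ∧ D ⊆ insert x A ∧ IsMinOf D x :=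
    fun x hx ↦ (mem_qActSet_iff.1 hx.2).imp
      fun D hD ↦ ⟨hD.1, hD.2.1.trans (subset_insert x A), hD.2.2⟩
  obtain ⟨C', hC', hC'A, he'⟩ :=
    hC.exists_isMinOf_subset_insert_sdiff hR (hCA.trans (subset_insert a A)) he
  exact Or.inr (mem_extSet_iff.2
    ⟨ha, C', hC', hC'A.trans (insert_subset_insert subset_union_left), he'⟩)

lemma CircuitsOrthogonal.eq_activeBasis [Finite α] (h : CircuitsOrthogonal M₁ M₂)
    (hB : M₁.Indep B) (hBc : M₂.Indep Bᶜ) (hAc : Aᶜ ⊆ Bᶜ ∪ ExtSet M₂ Bᶜ)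
    (hA : A ⊆ B ∪ ExtSet M₁ B) : B = activeBasis M₁ M₂ A := by
  have h₁ := h.inter_eq_sdiff_qActSet hB hAc hA
  have h₂ := h.symm.inter_eq_sdiff_qActSet hBc (by rwa [compl_compl, compl_compl]) hAc
  ext y
  have h₁y := Set.ext_iff.1 h₁ y
  have h₂y := Set.ext_iff.1 h₂ y
  have hQ : y ∈ QActSet M₂ Aᶜ → y ∉ A := fun h ↦ qActSet_subset h
  simp only [activeBasis, mem_inter_iff, mem_sdiff, mem_compl_iff, mem_union] at h₁y h₂y hQ ⊢
  tauto

theorem CircuitsOrthogonal.existsUnique_activeBasis [Finite α] (h : CircuitsOrthogonal M₁ M₂)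
    (hE₁ : M₁.E = univ) (hE₂ : M₂.E = univ) (A : Set α) :
    ∃! B, M₁.Indep B ∧ M₂.Indep Bᶜ ∧ Aᶜ ⊆ Bᶜ ∪ ExtSet M₂ Bᶜ ∧ A ⊆ B ∪ ExtSet M₁ B := by
  refine ⟨activeBasis M₁ M₂ A,
    ⟨h.indep_activeBasis hE₁ A, ?_, ?_, subset_activeBasis_union_extSet A⟩,
    fun B ⟨hB, hBc, hAc, hA⟩ ↦ h.eq_activeBasis hB hBc hAc hA⟩
  · rw [compl_activeBasis]
    exact h.symm.indep_activeBasis hE₂ Aᶜ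
  · rw [compl_activeBasis]
    exact subset_activeBasis_union_extSet Aᶜ

end Activity

end Matroid

end

open Matroid

/-- For a matroid perspective `M → N`, the intervals `[B ∖ Int_N(B), B ∪ Ext_M(B)]`,
where `B` ranges over the subsets of `E` independent in `M` and spanning in `N`,
partition the power set of `E`. -/
theorem stmt10 {α : Type*} [Fintype α] [LinearOrder α] (M N : Matroid α)
    (hME : M.E = Set.univ) (hNE : N.E = Set.univ)
    (hMN : ∀ F, N.IsFlat F → M.IsFlat F) :
    ∀ A : Set α, ∃! B : Set α,
      M.Indep B ∧ N.Spanning B ∧ B \ IntSet N B ⊆ A ∧ A ⊆ B ∪ ExtSet M B := by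
  intro A
  have hperp := circuitsOrthogonal_dual_of_forall_isFlat (hME.trans hNE.symm) hMN
  refine (existsUnique_congr fun B ↦ ?_).2 (hperp.existsUnique_activeBasis hME hNE A)
  rw [spanning_iff_dual_indep_compl hNE, ← compl_subset_compl, compl_sdiff,
    intSet_eq_extSet_dual_compl, union_comm]
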